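/- Let Ω be a finite set with |Ω| = n and N = 2^n, and let k ≥ 1 be a real number. For all mass functions m1, m2 on Ω, Σ_{A⊆Ω} |q_{m1 ⊚∩ m2}(A) − q_{m_∅}(A)|^k = N − 1 holds if and only if m1 = m_Ω and m2 = m_Ω. In particular, the conflict degree C(m1,m2) = 1 − (N−1)^{−1/k}·(Σ_{A⊆Ω} |q_{m1 ⊚∩ m2}(A) − q_{m_∅}(A)|^k)^{1/k} vanishes only for the pair of vacuous mass functions, so it fails the extreme-conflict-values property. -/

import Mathlib

/-!
Commonality values of a mass function lie in `[0, 1]`, equal `1` at `∅`, and are multiplied by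
the conjunctive combination, which again yields a mass function `m`. Hence the sum equals
`∑_{A ≠ ∅} q_m(A)^k ≤ 2^n - 1`, with equality iff `q_m ≡ 1`, i.e. iff `m(Ω) = q_m(Ω) = 1`.
For `m = m1 ⊚∩ m2` this reads `m1(Ω) · m2(Ω) = 1`, which forces both factors to be `1`.
-/

open Finset

/-- A mass function on a finite frame `Ω`: nonnegative and sums to one over all subsets. -/
def IsMass {Ω : Type*} [Fintype Ω] (m : Finset Ω → ℝ) : Prop :=
  (∀ A, 0 ≤ m A) ∧ ∑ A : Finset Ω, m A = 1

/-- Commonality (inclusion functional): `q m A = ∑_{E ⊇ A} m E`. -/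
def commonality {Ω : Type*} [Fintype Ω] [DecidableEq Ω] (m : Finset Ω → ℝ) (A : Finset Ω) : ℝ :=
  ∑ E : Finset Ω, if A ⊆ E then m E else 0

/-- Plausibility (hitting functional): `pl m A = ∑_{E ∩ A ≠ ∅} m E`. -/
def plaus {Ω : Type*} [Fintype Ω] [DecidableEq Ω] (m : Finset Ω → ℝ) (A : Finset Ω) : ℝ :=
  ∑ E : Finset Ω, if E ∩ A ≠ ∅ then m E else 0

/-- Implicability: `b m A = ∑_{E ⊆ A} m E`. -/
def implic {Ω : Type*} [Fintype Ω] [DecidableEq Ω] (m : Finset Ω → ℝ) (A : Finset Ω) : ℝ :=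
  ∑ E : Finset Ω, if E ⊆ A then m E else 0

/-- Conjunctive combination: `(m1 ⊚∩ m2)(E) = ∑_{A ∩ B = E} m1 A * m2 B`. -/
def conjC {Ω : Type*} [Fintype Ω] [DecidableEq Ω] (m1 m2 : Finset Ω → ℝ) (E : Finset Ω) : ℝ :=
  ∑ A : Finset Ω, ∑ B : Finset Ω, if A ∩ B = E then m1 A * m2 B else 0

/-- Disjunctive combination: `(m1 ⊚∪ m2)(E) = ∑_{A ∪ B = E} m1 A * m2 B`. -/
def disjC {Ω : Type*} [Fintype Ω] [DecidableEq Ω] (m1 m2 : Finset Ω → ℝ) (E : Finset Ω) : ℝ :=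
  ∑ A : Finset Ω, ∑ B : Finset Ω, if A ∪ B = E then m1 A * m2 B else 0

/-- Categorical mass function `m_A`. -/
def categorical {Ω : Type*} [Fintype Ω] [DecidableEq Ω] (A : Finset Ω) : Finset Ω → ℝ :=
  fun E => if E = A then 1 else 0

namespace IsMass

variable {Ω : Type*} [Fintype Ω] {m : Finset Ω → ℝ}

lemma apply_le_one (hm : IsMass m) (A : Finset Ω) : m A ≤ 1 :=
  hm.2 ▸ single_le_sum (fun E _ => hm.1 E) (mem_univ A)

variable [DecidableEq Ω]

lemma eq_categorical_iff (hm : IsMass m) {A : Finset Ω} : m = categorical A ↔ m A = 1 := by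
  refine ⟨fun h => h ▸ if_pos rfl, fun hA => ?_⟩
  have hrest : ∑ E ∈ univ.erase A, m E = 0 := by
    linarith [add_sum_erase univ m (mem_univ A), hm.2]
  have hzero := (sum_eq_zero_iff_of_nonneg fun E _ => hm.1 E).1 hrest
  funext E
  by_cases hE : E = A
  · simp [categorical, hE, hA]
  · simp [categorical, hE, hzero E (by simp [hE])]

lemma commonality_nonneg (hm : IsMass m) (A : Finset Ω) : 0 ≤ commonality m A :=
  sum_nonneg fun E _ => by split_ifs; exacts [hm.1 E, le_rfl]

lemma commonality_le_one (hm : IsMass m) (A : Finset Ω) : commonality m A ≤ 1 :=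
  hm.2 ▸ sum_le_sum fun E _ => by split_ifs; exacts [le_rfl, hm.1 E]

lemma commonality_empty (hm : IsMass m) : commonality m ∅ = 1 := by
  simpa [commonality] using hm.2

end IsMass

section Commonality

variable {Ω : Type*} [Fintype Ω] [DecidableEq Ω]

lemma commonality_univ (m : Finset Ω → ℝ) : commonality m univ = m univ := by
  simp [commonality, univ_subset_iff]

lemma commonality_categorical (B A : Finset Ω) :
    commonality (categorical B) A = if A ⊆ B then 1 else 0 := by
  rw [commonality, sum_eq_single B] <;> simp +contextual [categorical]

lemma commonality_conjC (m1 m2 : Finset Ω → ℝ) (A : Finset Ω) :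
    commonality (conjC m1 m2) A = commonality m1 A * commonality m2 A := by
  calc commonality (conjC m1 m2) A
      = ∑ B, ∑ C, ∑ E, if B ∩ C = E then (if A ⊆ E then m1 B * m2 C else 0) else (0 : ℝ) := by
        simp only [commonality, conjC, ite_sum_zero]
        rw [sum_comm]; refine sum_congr rfl fun B _ => ?_
        rw [sum_comm]; refine sum_congr rfl fun C _ => ?_
        refine sum_congr rfl fun E _ => ?_
        split_ifs <;> simp_all
    _ = ∑ B, ∑ C, if A ⊆ B ∩ C then m1 B * m2 C else 0 := by
        simp only [sum_ite_eq, mem_univ, if_true]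
    _ = commonality m1 A * commonality m2 A := by
        simp only [commonality, sum_mul_sum, subset_inter_iff, ite_zero_mul_ite_zero]

end Commonality

namespace IsMass

variable {Ω : Type*} [Fintype Ω] [DecidableEq Ω] {m m1 m2 : Finset Ω → ℝ}

lemma conjC (h1 : IsMass m1) (h2 : IsMass m2) : IsMass (conjC m1 m2) := by
  refine ⟨fun E => sum_nonneg fun B _ => sum_nonneg fun C _ => ?_, ?_⟩
  · split_ifs
    exacts [mul_nonneg (h1.1 B) (h2.1 C), le_rfl]
  · have hq := commonality_conjC m1 m2 ∅
    rw [h1.commonality_empty, h2.commonality_empty, mul_one] at hq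
    simpa [commonality] using hq

lemma forall_commonality_eq_one_iff (hm : IsMass m) :
    (∀ A, commonality m A = 1) ↔ m = categorical univ := by
  refine ⟨fun h => hm.eq_categorical_iff.2 (commonality_univ m ▸ h univ), ?_⟩
  rintro rfl A
  simp [commonality_categorical]

lemma sum_abs_commonality_sub_rpow_eq_iff (hm : IsMass m) {k : ℝ} (hk : 0 < k) :
    ∑ A : Finset Ω, |commonality m A - commonality (categorical ∅) A| ^ k =
        2 ^ Fintype.card Ω - 1 ↔ m = categorical univ := by
  have hsum : ∑ A : Finset Ω, |commonality m A - commonality (categorical ∅) A| ^ k =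
      ∑ A ∈ univ.erase ∅, commonality m A ^ k := by
    have hempty : |commonality m ∅ - commonality (categorical ∅) (∅ : Finset Ω)| ^ k = 0 := by
      simp [commonality_categorical, hm.commonality_empty, hk.ne']
    rw [← sum_erase (a := ∅) univ hempty]
    refine sum_congr rfl fun A hA => ?_
    simp [commonality_categorical, ne_of_mem_erase hA, abs_of_nonneg (hm.commonality_nonneg A)]
  have hcard : (2 : ℝ) ^ Fintype.card Ω - 1 = ∑ A ∈ univ.erase (∅ : Finset Ω), 1 := by
    simp [card_erase_of_mem, Fintype.card_finset]
  rw [hsum, hcard, sum_eq_sum_iff_of_le fun A _ =>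
      Real.rpow_le_one (hm.commonality_nonneg A) (hm.commonality_le_one A) hk.le,
    ← hm.forall_commonality_eq_one_iff]
  refine ⟨fun h A => ?_, fun h A _ => by rw [h A, Real.one_rpow]⟩
  rcases eq_or_ne A ∅ with rfl | hA
  · exact hm.commonality_empty
  · rw [← Real.rpow_left_inj (hm.commonality_nonneg A) zero_le_one hk.ne', Real.one_rpow]
    exact h A (mem_erase.2 ⟨hA, mem_univ A⟩)

end IsMass

lemma conjC_eq_categorical_univ_iff {Ω : Type*} [Fintype Ω] [DecidableEq Ω]
    {m1 m2 : Finset Ω → ℝ} (h1 : IsMass m1) (h2 : IsMass m2) :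
    conjC m1 m2 = categorical univ ↔ m1 = categorical univ ∧ m2 = categorical univ := by
  rw [(h1.conjC h2).eq_categorical_iff, h1.eq_categorical_iff, h2.eq_categorical_iff,
    ← commonality_univ (conjC m1 m2), commonality_conjC, commonality_univ, commonality_univ]
  constructor
  · intro h
    constructor <;> nlinarith [h1.apply_le_one univ, h2.apply_le_one univ, h1.1 univ, h2.1 univ]
  · rintro ⟨hm1, hm2⟩
    rw [hm1, hm2, mul_one]

/-- With `N = 2^n`, for all mass functions `m1, m2`,
`∑_{A⊆Ω} |q_{m1 ⊚∩ m2}(A) − q_{m_∅}(A)|^k = N − 1` holds iff `m1 = m_Ω` and `m2 = m_Ω`;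
so the conflict degree `1 − (N−1)^{−1/k}·(∑ …)^{1/k}` vanishes only for the pair of
vacuous mass functions, failing the extreme-conflict-values property. -/
theorem lk_commonality_conflict_max_iff_vacuous {Ω : Type*} [Fintype Ω] [DecidableEq Ω]
    (k : ℝ) (hk : 1 ≤ k) (m1 m2 : Finset Ω → ℝ) (h1 : IsMass m1) (h2 : IsMass m2) :
    (∑ A : Finset Ω,
        |commonality (conjC m1 m2) A - commonality (categorical (∅ : Finset Ω)) A| ^ k =
      2 ^ (Fintype.card Ω) - 1) ↔
      m1 = categorical (Finset.univ : Finset Ω) ∧ m2 = categorical (Finset.univ : Finset Ω) :=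
  (h1.conjC h2).sum_abs_commonality_sub_rpow_eq_iff (by linarith) |>.trans
    (conjC_eq_categorical_univ_iff h1 h2)
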